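/- arXiv:1012.1686 — 3 statements merged into one kernel-verified Lean document; each statement's English description precedes it below -/
import Mathlib

section
/- Let W be a finite-dimensional inner product space and ∂ : W_n → W_{n+1}, ∂* : W_{n+1} → W_n linear maps on a sequence of finite-dimensional inner product spaces with ∂∘∂ = 0, ∂*∘∂* = 0, and ∂, ∂* adjoint to each other. Set □ = ∂∂* + ∂*∂. Then each W_n decomposes orthogonally as W_n = im(∂*) ⊕ ker(□) ⊕ im(∂), and moreover ker(∂*) = im(∂*) ⊕ ker(□) and ker(∂) = im(∂) ⊕ ker(□). Consequently ker(∂)/im(∂) ≅ ker(□). -/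
/-!
Write `A = ∂ : U → V`, `B = ∂ : V → X` with `B ∘ A = 0`, and `□ = A A† + B† B`. Since
`re ⟪□ x, x⟫ = ‖A† x‖² + ‖B x‖²`, harmonic elements are exactly `ker A† ⊓ ker B`. As
`(range A)ᗮ = ker A†` and `range A ≤ ker B`, the orthogonal complement of `range A` inside
`ker B` is `ker □`, so `ker B = range A ⊕ ker □`; applying this to the adjoint complex
`B†, A†`, which has the same Laplacian, gives `ker A† = range B† ⊕ ker □`. Together with
`V = range B† ⊕ (range B†)ᗮ = range B† ⊕ ker B` this is the Hodge decomposition, and the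
second isomorphism theorem identifies `ker B / range A` with `ker □`.
-/

namespace Submodule

theorem nonempty_quotient_comap_subtype_equiv_of_sup_eq {R M : Type*} [Ring R]
    [AddCommGroup M] [Module R M] {p q K : Submodule R M} (hK : p ⊔ q = K)
    (hpq : Disjoint p q) : Nonempty ((K ⧸ comap K.subtype p) ≃ₗ[R] q) := by
  subst hK
  rw [sup_comm]
  have hbot : comap q.subtype q ⊓ comap q.subtype p = ⊥ := by
    rw [← comap_inf, inf_comm, hpq.eq_bot, comap_bot, ker_subtype]
  exact ⟨(LinearMap.quotientInfEquivSupQuotient q p).symm.trans (quotEquivOfEqBot _ hbot)⟩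

end Submodule

namespace LinearMap

open Submodule

variable {𝕜 U V X : Type*} [RCLike 𝕜]
  [NormedAddCommGroup U] [InnerProductSpace 𝕜 U] [FiniteDimensional 𝕜 U]
  [NormedAddCommGroup V] [InnerProductSpace 𝕜 V] [FiniteDimensional 𝕜 V]
  [NormedAddCommGroup X] [InnerProductSpace 𝕜 X] [FiniteDimensional 𝕜 X]

noncomputable def hodgeLaplacian (A : U →ₗ[𝕜] V) (B : V →ₗ[𝕜] X) : V →ₗ[𝕜] V :=
  A ∘ₗ A.adjoint + B.adjoint ∘ₗ B

theorem hodgeLaplacian_adjoint_adjoint (A : U →ₗ[𝕜] V) (B : V →ₗ[𝕜] X) :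
    hodgeLaplacian B.adjoint A.adjoint = hodgeLaplacian A B := by
  simp only [hodgeLaplacian, adjoint_adjoint, add_comm]

theorem re_inner_hodgeLaplacian_self (A : U →ₗ[𝕜] V) (B : V →ₗ[𝕜] X) (x : V) :
    RCLike.re (inner 𝕜 (hodgeLaplacian A B x) x) = ‖A.adjoint x‖ ^ 2 + ‖B x‖ ^ 2 := by
  simp only [hodgeLaplacian, add_apply, comp_apply, inner_add_left, map_add,
    ← adjoint_inner_right A, adjoint_inner_left B, inner_self_eq_norm_sq]

theorem ker_hodgeLaplacian (A : U →ₗ[𝕜] V) (B : V →ₗ[𝕜] X) :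
    ker (hodgeLaplacian A B) = ker A.adjoint ⊓ ker B := by
  refine le_antisymm (fun x hx => ?_) (fun x ⟨hA, hB⟩ => ?_)
  · have h := re_inner_hodgeLaplacian_self A B x
    rw [mem_ker.mp hx, inner_zero_left, map_zero, eq_comm,
      add_eq_zero_iff_of_nonneg (by positivity) (by positivity)] at h
    simpa using h
  · simp [hodgeLaplacian, mem_ker.mp hA, mem_ker.mp hB]

theorem isOrtho_range_adjoint_ker (B : V →ₗ[𝕜] X) : range B.adjoint ⟂ ker B := by
  simpa only [orthogonal_ker] using isOrtho_orthogonal_left (ker B)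

theorem isOrtho_ker_adjoint_range (A : U →ₗ[𝕜] V) : ker A.adjoint ⟂ range A := by
  simpa only [orthogonal_range] using isOrtho_orthogonal_left (range A)

theorem isOrtho_range_adjoint_ker_hodgeLaplacian (A : U →ₗ[𝕜] V) (B : V →ₗ[𝕜] X) :
    range B.adjoint ⟂ ker (hodgeLaplacian A B) :=
  (isOrtho_range_adjoint_ker B).mono_right (ker_hodgeLaplacian A B ▸ inf_le_right)

theorem isOrtho_ker_hodgeLaplacian_range (A : U →ₗ[𝕜] V) (B : V →ₗ[𝕜] X) :
    ker (hodgeLaplacian A B) ⟂ range A :=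
  (isOrtho_ker_adjoint_range A).mono_left (ker_hodgeLaplacian A B ▸ inf_le_left)

variable {A : U →ₗ[𝕜] V} {B : V →ₗ[𝕜] X}

theorem ker_eq_range_sup_ker_hodgeLaplacian (hBA : B ∘ₗ A = 0) :
    ker B = range A ⊔ ker (hodgeLaplacian A B) := by
  rw [ker_hodgeLaplacian, ← orthogonal_range,
    sup_orthogonal_inf_of_hasOrthogonalProjection (range_le_ker_iff.mpr hBA)]

theorem ker_adjoint_eq_range_adjoint_sup_ker_hodgeLaplacian (hBA : B ∘ₗ A = 0) :
    ker A.adjoint = range B.adjoint ⊔ ker (hodgeLaplacian A B) := by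
  have hBA' : A.adjoint ∘ₗ B.adjoint = 0 := by rw [← adjoint_comp, hBA, map_zero]
  simpa only [hodgeLaplacian_adjoint_adjoint, adjoint_adjoint]
    using ker_eq_range_sup_ker_hodgeLaplacian hBA'

theorem range_adjoint_sup_ker_hodgeLaplacian_sup_range (hBA : B ∘ₗ A = 0) :
    range B.adjoint ⊔ ker (hodgeLaplacian A B) ⊔ range A = ⊤ := by
  rw [sup_assoc, sup_comm (ker _), ← ker_eq_range_sup_ker_hodgeLaplacian hBA,
    ← adjoint_adjoint B, ← orthogonal_range, adjoint_adjoint,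
    sup_orthogonal_of_hasOrthogonalProjection]

end LinearMap

theorem stmt11_general {𝕜 : Type*} [RCLike 𝕜] (W : ℤ → Type*)
    [∀ n, NormedAddCommGroup (W n)] [∀ n, InnerProductSpace 𝕜 (W n)]
    [∀ n, FiniteDimensional 𝕜 (W n)]
    (d : ∀ n : ℤ, W n →ₗ[𝕜] W (n + 1)) (dstar : ∀ n : ℤ, W (n + 1) →ₗ[𝕜] W n)
    (hdd : ∀ (n : ℤ) (x : W n), d (n + 1) (d n x) = 0)
    (hadj : ∀ (n : ℤ) (x : W n) (y : W (n + 1)),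
      @inner 𝕜 _ _ (d n x) y = @inner 𝕜 _ _ x (dstar n y)) :
    ∀ n : ℤ, ∀ box : W (n + 1) →ₗ[𝕜] W (n + 1),
      box = (d n) ∘ₗ (dstar n) + (dstar (n + 1)) ∘ₗ (d (n + 1)) →
      (LinearMap.range (dstar (n + 1)) ⊔ LinearMap.ker box ⊔ LinearMap.range (d n) = ⊤) ∧
      (∀ x ∈ LinearMap.range (dstar (n + 1)), ∀ y ∈ LinearMap.ker box,
        @inner 𝕜 _ _ x y = (0 : 𝕜)) ∧
      (∀ x ∈ LinearMap.range (dstar (n + 1)), ∀ y ∈ LinearMap.range (d n),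
        @inner 𝕜 _ _ x y = (0 : 𝕜)) ∧
      (∀ x ∈ LinearMap.ker box, ∀ y ∈ LinearMap.range (d n),
        @inner 𝕜 _ _ x y = (0 : 𝕜)) ∧
      (LinearMap.ker (dstar n) = LinearMap.range (dstar (n + 1)) ⊔ LinearMap.ker box) ∧
      (LinearMap.ker (d (n + 1)) = LinearMap.range (d n) ⊔ LinearMap.ker box) ∧
      Nonempty ((↥(LinearMap.ker (d (n + 1))) ⧸
          (Submodule.comap (LinearMap.ker (d (n + 1))).subtype (LinearMap.range (d n))))
        ≃ₗ[𝕜] ↥(LinearMap.ker box)) := by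
  open LinearMap Submodule in
  intro n box hbox
  have hstar : ∀ m, dstar m = (d m).adjoint := fun m =>
    (eq_adjoint_iff _ _).mpr fun x y => by rw [← inner_conj_symm, ← hadj, inner_conj_symm]
  have hcomp : d (n + 1) ∘ₗ d n = 0 := LinearMap.ext (hdd n)
  obtain rfl : box = hodgeLaplacian (d n) (d (n + 1)) := by rw [hbox, hstar, hstar]; rfl
  have hker := ker_eq_range_sup_ker_hodgeLaplacian hcomp
  simp only [hstar, ← isOrtho_iff_inner_eq]
  refine ⟨range_adjoint_sup_ker_hodgeLaplacian_sup_range hcomp,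
    isOrtho_range_adjoint_ker_hodgeLaplacian _ _,
    (isOrtho_range_adjoint_ker _).mono_right (range_le_ker_iff.mpr hcomp),
    isOrtho_ker_hodgeLaplacian_range _ _,
    ker_adjoint_eq_range_adjoint_sup_ker_hodgeLaplacian hcomp, hker,
    nonempty_quotient_comap_subtype_equiv_of_sup_eq hker.symm
      (isOrtho_ker_hodgeLaplacian_range _ _).symm.disjoint⟩

/-- **algebraic Hodge decomposition.** Let `(Wₙ)` be finite-dimensional
inner product spaces with adjoint differentials `∂ : Wₙ → W_{n+1}`,
`∂* : W_{n+1} → Wₙ` satisfying `∂∘∂ = 0`, `∂*∘∂* = 0`.  With `□ = ∂∂* + ∂*∂`, every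
`Wₙ` decomposes orthogonally as `im(∂*) ⊕ ker(□) ⊕ im(∂)`; moreover
`ker(∂*) = im(∂*) ⊕ ker(□)`, `ker(∂) = im(∂) ⊕ ker(□)`, and consequently
`ker(∂)/im(∂) ≅ ker(□)`. -/
theorem stmt11 {𝕜 : Type*} [RCLike 𝕜] (W : ℤ → Type*)
    [∀ n, NormedAddCommGroup (W n)] [∀ n, InnerProductSpace 𝕜 (W n)]
    [∀ n, FiniteDimensional 𝕜 (W n)]
    (d : ∀ n : ℤ, W n →ₗ[𝕜] W (n + 1)) (dstar : ∀ n : ℤ, W (n + 1) →ₗ[𝕜] W n)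
    (hdd : ∀ (n : ℤ) (x : W n), d (n + 1) (d n x) = 0)
    (hss : ∀ (n : ℤ) (x : W (n + 1 + 1)), dstar n (dstar (n + 1) x) = 0)
    (hadj : ∀ (n : ℤ) (x : W n) (y : W (n + 1)),
      @inner 𝕜 _ _ (d n x) y = @inner 𝕜 _ _ x (dstar n y)) :
    ∀ n : ℤ, ∀ box : W (n + 1) →ₗ[𝕜] W (n + 1),
      box = (d n) ∘ₗ (dstar n) + (dstar (n + 1)) ∘ₗ (d (n + 1)) →
      (LinearMap.range (dstar (n + 1)) ⊔ LinearMap.ker box ⊔ LinearMap.range (d n) = ⊤) ∧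
      (∀ x ∈ LinearMap.range (dstar (n + 1)), ∀ y ∈ LinearMap.ker box,
        @inner 𝕜 _ _ x y = (0 : 𝕜)) ∧
      (∀ x ∈ LinearMap.range (dstar (n + 1)), ∀ y ∈ LinearMap.range (d n),
        @inner 𝕜 _ _ x y = (0 : 𝕜)) ∧
      (∀ x ∈ LinearMap.ker box, ∀ y ∈ LinearMap.range (d n),
        @inner 𝕜 _ _ x y = (0 : 𝕜)) ∧
      (LinearMap.ker (dstar n) = LinearMap.range (dstar (n + 1)) ⊔ LinearMap.ker box) ∧
      (LinearMap.ker (d (n + 1)) = LinearMap.range (d n) ⊔ LinearMap.ker box) ∧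
      Nonempty ((↥(LinearMap.ker (d (n + 1))) ⧸
          (Submodule.comap (LinearMap.ker (d (n + 1))).subtype (LinearMap.range (d n))))
        ≃ₗ[𝕜] ↥(LinearMap.ker box)) :=
  stmt11_general W d dstar hdd hadj
end

section
/- Let 𝔤 = ⊕_{i=-k}^{k} 𝔤_i be a |k|-graded semisimple Lie algebra and V = V_0 ⊕ ... ⊕ V_N a finite-dimensional 𝔤-module graded so that 𝔤_i·V_j ⊆ V_{i+j}, with V_0 = ker(∂) where ∂ : V → 𝔤_-^* ⊗ V is the Chevalley–Eilenberg differential v ↦ (X ↦ X·v). Then for each 0 ≤ i ≤ N, the map φ_i : V_i → 𝒰_{-i}(𝔤_-)^* ⊗ V_0 given by φ_i(v)(u) = −u^⊤·v (where u ↦ u^⊤ is the anti-automorphism of 𝒰(𝔤_-) with X^⊤ = −X) is well-defined and injective. -/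
/-!
Since `𝔤₋` lowers the degree, the degree-`n` monomials `ι X₁ ⋯ ι Xₛ` of `𝒰(𝔤₋)` map `V_m`
into `V_{m-n}`, which gives well-definedness. For injectivity, let `v ∈ V_i` be killed by all
`u^⊤` with `u` of degree `i`, and let `X ∈ 𝔤_{-m}`. Then `X · v ∈ V_{i-m}` is killed by all
`u'^⊤` with `u'` of degree `i - m`, because `(ι X · u')^⊤ = -u'^⊤ ι X`; by induction on `i`,
`X · v = 0`. Hence `v ∈ ker ∂ = V₀`, so `v = 0` unless `i = 0`, where `u = 1` applies directly.
-/

open UniversalEnvelopingAlgebra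

section Monomials

variable {K nl : Type*} [CommRing K] [LieRing nl] [LieAlgebra K nl]

def gradedMonomials (g : ℤ → Submodule K nl) (n : ℕ) : Set (UniversalEnvelopingAlgebra K nl) :=
  {u | ∃ (s : ℕ) (d : Fin s → ℕ) (X : Fin s → nl),
    (∀ t, X t ∈ g (-(d t : ℤ))) ∧ (∑ t, d t) = n ∧ u = (List.ofFn fun t => ι K (X t)).prod}

variable {g : ℤ → Submodule K nl}

theorem one_mem_gradedMonomials : 1 ∈ gradedMonomials g 0 :=
  ⟨0, Fin.elim0, Fin.elim0, fun t => t.elim0, by simp, by simp⟩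

theorem ι_mul_mem_gradedMonomials {x : nl} {m n : ℕ} {u : UniversalEnvelopingAlgebra K nl}
    (hx : x ∈ g (-(m : ℤ))) (hu : u ∈ gradedMonomials g n) :
    ι K x * u ∈ gradedMonomials g (m + n) := by
  obtain ⟨s, d, X, hX, rfl, rfl⟩ := hu
  refine ⟨s + 1, Fin.cons m d, Fin.cons x X, Fin.cases hx hX, ?_, ?_⟩
  · simp [Fin.sum_univ_succ]
  · simp [List.ofFn_succ]

theorem gradedMonomials_induction {motive : ℕ → UniversalEnvelopingAlgebra K nl → Prop}
    (one : motive 0 1)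
    (ι_mul : ∀ (m n : ℕ) (x : nl) (u : UniversalEnvelopingAlgebra K nl),
      x ∈ g (-(m : ℤ)) → motive n u → motive (m + n) (ι K x * u))
    {n : ℕ} {u : UniversalEnvelopingAlgebra K nl} (hu : u ∈ gradedMonomials g n) :
    motive n u := by
  obtain ⟨s, d, X, hX, rfl, rfl⟩ := hu
  induction s with
  | zero => simpa using one
  | succ s ih =>
    have h := ι_mul _ _ _ _ (hX 0) (ih (fun t => d t.succ) (fun t => X t.succ) fun t => hX t.succ)
    simpa [Fin.sum_univ_succ, List.ofFn_succ] using h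

end Monomials

section Action

variable {K nl V : Type*} [CommRing K] [LieRing nl] [LieAlgebra K nl]
  [AddCommGroup V] [LieRingModule nl V]

theorem lie_eq_zero_of_iSup_eq_top {ι : Type*} {g : ι → Submodule K nl} (hg : ⨆ j, g j = ⊤)
    {v : V} (h : ∀ j, ∀ x ∈ g j, ⁅x, v⁆ = 0) (x : nl) : ⁅x, v⁆ = 0 :=
  Submodule.iSup_induction g (motive := fun x => ⁅x, v⁆ = 0) (hg ▸ Submodule.mem_top) h
    (zero_lie v) fun x y hx hy => by rw [add_lie, hx, hy, add_zero]

variable [Module K V] [LieModule K nl V]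
  (τ : UniversalEnvelopingAlgebra K nl →ₗ[K] UniversalEnvelopingAlgebra K nl)

theorem lift_toEnd_transpose_ι_mul_apply (hτmul : ∀ a b, τ (a * b) = τ b * τ a)
    (hτι : ∀ X : nl, τ (ι K X) = -(ι K X)) (x : nl) (u : UniversalEnvelopingAlgebra K nl)
    (v : V) :
    lift K (LieModule.toEnd K nl V) (τ (ι K x * u)) v =
      -lift K (LieModule.toEnd K nl V) (τ u) ⁅x, v⁆ := by
  rw [hτmul, map_mul, Module.End.mul_apply, hτι, map_neg, lift_ι_apply]
  simp

variable {τ} {g : ℤ → Submodule K nl} {Vm : ℤ → Submodule K V}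

theorem lift_toEnd_transpose_apply_mem_of_mem_gradedMonomials
    (hcompat : ∀ i m : ℤ, ∀ x ∈ g i, ∀ v ∈ Vm m, ⁅x, v⁆ ∈ Vm (m + i))
    (hτ1 : τ 1 = 1) (hτmul : ∀ a b, τ (a * b) = τ b * τ a)
    (hτι : ∀ X : nl, τ (ι K X) = -(ι K X))
    {n : ℕ} {u : UniversalEnvelopingAlgebra K nl} (hu : u ∈ gradedMonomials g n)
    {m : ℤ} {v : V} (hv : v ∈ Vm m) :
    lift K (LieModule.toEnd K nl V) (τ u) v ∈ Vm (m - n) := by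
  refine gradedMonomials_induction
    (motive := fun n u => ∀ {m : ℤ} {v : V}, v ∈ Vm m →
      lift K (LieModule.toEnd K nl V) (τ u) v ∈ Vm (m - n))
    (fun hv => by simpa [hτ1] using hv) (fun k n x u hx ih m v hv => ?_) hu hv
  rw [lift_toEnd_transpose_ι_mul_apply τ hτmul hτι]
  have h := neg_mem (ih (hcompat _ m x hx v hv))
  rw [Nat.cast_add, ← sub_sub]
  rwa [← sub_eq_add_neg] at h

theorem lift_toEnd_transpose_apply_mem_of_mem_span
    (hcompat : ∀ i m : ℤ, ∀ x ∈ g i, ∀ v ∈ Vm m, ⁅x, v⁆ ∈ Vm (m + i))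
    (hτ1 : τ 1 = 1) (hτmul : ∀ a b, τ (a * b) = τ b * τ a)
    (hτι : ∀ X : nl, τ (ι K X) = -(ι K X))
    {n : ℕ} {u : UniversalEnvelopingAlgebra K nl} (hu : u ∈ Submodule.span K (gradedMonomials g n))
    {m : ℤ} {v : V} (hv : v ∈ Vm m) :
    lift K (LieModule.toEnd K nl V) (τ u) v ∈ Vm (m - n) := by
  induction hu using Submodule.span_induction with
  | mem u hu =>
    exact lift_toEnd_transpose_apply_mem_of_mem_gradedMonomials hcompat hτ1 hτmul hτι hu hv
  | zero => simp
  | add a b _ _ ha hb => simpa only [map_add, LinearMap.add_apply] using add_mem ha hb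
  | smul c a _ ha => simpa only [map_smul, LinearMap.smul_apply] using Submodule.smul_mem _ c ha

theorem eq_zero_of_forall_gradedMonomials_transpose_apply_eq_zero
    (hg : ⨆ j, g j = ⊤) (hgnonneg : ∀ j : ℤ, 0 ≤ j → g j = ⊥)
    (hV : iSupIndep Vm) (hVneg : ∀ m : ℤ, m < 0 → Vm m = ⊥)
    (hcompat : ∀ i m : ℤ, ∀ x ∈ g i, ∀ v ∈ Vm m, ⁅x, v⁆ ∈ Vm (m + i))
    (hker : ∀ v : V, v ∈ Vm 0 ↔ ∀ x : nl, ⁅x, v⁆ = 0)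
    (hτ1 : τ 1 = 1) (hτmul : ∀ a b, τ (a * b) = τ b * τ a)
    (hτι : ∀ X : nl, τ (ι K X) = -(ι K X)) (i : ℕ) {v : V} (hv : v ∈ Vm i)
    (h : ∀ u ∈ gradedMonomials g i, lift K (LieModule.toEnd K nl V) (τ u) v = 0) : v = 0 := by
  induction i using Nat.strong_induction_on generalizing v with
  | _ i ih =>
    rcases Nat.eq_zero_or_pos i with rfl | hi
    · simpa [hτ1] using h 1 one_mem_gradedMonomials
    have hlie : ∀ j, ∀ x ∈ g j, ⁅x, v⁆ = 0 := by
      intro j x hx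
      rcases le_or_gt 0 j with hj | hj
      · simp [(Submodule.mem_bot K).mp (hgnonneg j hj ▸ hx)]
      obtain ⟨m, rfl⟩ : ∃ m : ℕ, j = -m := ⟨j.natAbs, by omega⟩
      have hxv := hcompat _ _ x hx v hv
      rcases lt_or_ge i m with him | hmi
      · exact (Submodule.mem_bot K).mp (hVneg (i + -m) (by omega) ▸ hxv)
      refine ih (i - m) (by omega) (by rwa [Nat.cast_sub hmi, sub_eq_add_neg]) fun u hu => ?_
      have hxu := h _ (Nat.add_sub_cancel' hmi ▸ ι_mul_mem_gradedMonomials hx hu)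
      rwa [lift_toEnd_transpose_ι_mul_apply τ hτmul hτι, neg_eq_zero] at hxu
    have hv0 : v ∈ Vm 0 := (hker v).mpr (lie_eq_zero_of_iSup_eq_top hg hlie)
    exact Submodule.disjoint_def.mp (hV.pairwiseDisjoint (by exact_mod_cast hi.ne')) v hv hv0

end Action

theorem stmt15_general {K nl V : Type*} [Field K]
    [LieRing nl] [LieAlgebra K nl]
    [AddCommGroup V] [Module K V] [LieRingModule nl V] [LieModule K nl V]
    (k N : ℕ) (g : ℤ → Submodule K nl)
    (hgint : DirectSum.IsInternal g)
    (hgsupp : ∀ i : ℤ, (i < -(k : ℤ) ∨ 0 ≤ i) → g i = ⊥)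
    (Vm : ℤ → Submodule K V)
    (hVint : DirectSum.IsInternal Vm)
    (hVsupp : ∀ m : ℤ, (m < 0 ∨ (N : ℤ) < m) → Vm m = ⊥)
    (hcompat : ∀ i m : ℤ, ∀ x ∈ g i, ∀ v ∈ Vm m, ⁅x, v⁆ ∈ Vm (m + i))
    (hker : ∀ v : V, v ∈ Vm 0 ↔ ∀ x : nl, ⁅x, v⁆ = 0)
    (U : ℕ → Submodule K (UniversalEnvelopingAlgebra K nl))
    (hUspan : ∀ i : ℕ, U i = Submodule.span K
      {u : UniversalEnvelopingAlgebra K nl |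
        ∃ (s : ℕ) (d : Fin s → ℕ) (X : Fin s → nl),
          (∀ t, X t ∈ g (-(d t : ℤ))) ∧ (∑ t, d t) = i ∧
          u = (List.ofFn fun t => ι K (X t)).prod})
    (τ : UniversalEnvelopingAlgebra K nl →ₗ[K] UniversalEnvelopingAlgebra K nl)
    (hτ1 : τ 1 = 1)
    (hτmul : ∀ a b, τ (a * b) = τ b * τ a)
    (hτι : ∀ X : nl, τ (ι K X) = -(ι K X)) :
    ∀ ρ : UniversalEnvelopingAlgebra K nl →ₐ[K] Module.End K V,
      ρ = (UniversalEnvelopingAlgebra.lift K) (LieModule.toEnd K nl V) →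
      ∀ i : ℕ, i ≤ N →
        (∀ v ∈ Vm (i : ℤ), ∀ u ∈ U i, -((ρ (τ u)) v) ∈ Vm 0) ∧
        Function.Injective
          (fun v : ↥(Vm (i : ℤ)) => fun u : ↥(U i) => -((ρ (τ (u : _))) (v : V))) := by
  rintro ρ rfl i -
  refine ⟨fun v hv u hu => neg_mem ?_, fun v w hvw => ?_⟩
  · have h := lift_toEnd_transpose_apply_mem_of_mem_span hcompat hτ1 hτmul hτι (hUspan i ▸ hu) hv
    rwa [sub_self] at h
  have hsub : (v : V) - w = 0 := by
    refine eq_zero_of_forall_gradedMonomials_transpose_apply_eq_zero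
      hgint.submodule_iSup_eq_top (fun j hj => hgsupp j (.inr hj)) hVint.submodule_iSupIndep
      (fun m hm => hVsupp m (.inl hm)) hcompat hker hτ1 hτmul hτι i (sub_mem v.2 w.2)
      fun u hu => ?_
    have h := congrFun hvw ⟨u, hUspan i ▸ Submodule.subset_span hu⟩
    rw [neg_inj] at h
    rw [map_sub, h, sub_self]
  exact Subtype.ext (sub_eq_zero.mp hsub)

/-- Let `𝔤` be `|k|`-graded with nilpotent part `𝔫 = 𝔤₋` (graded by
`g j = 𝔤₋ⱼ`), and let `V = V₀ ⊕ ... ⊕ V_N` be a graded module with `𝔤ᵢ · Vⱼ ⊆ V_{i+j}`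
and `V₀ = ker ∂` (the annihilator of the `𝔫`-action).  Then for `0 ≤ i ≤ N` the map
`φᵢ : Vᵢ → 𝒰₋ᵢ(𝔤₋)* ⊗ V₀`, `φᵢ(v)(u) = -u^⊤ · v` (with `u ↦ u^⊤` the
anti-automorphism of `𝒰(𝔤₋)` with `X^⊤ = -X`) is well defined (takes values in `V₀`)
and injective. -/
theorem stmt15 {K nl V : Type*} [Field K] [CharZero K]
    [LieRing nl] [LieAlgebra K nl] [FiniteDimensional K nl]
    [AddCommGroup V] [Module K V] [LieRingModule nl V] [LieModule K nl V]
    [FiniteDimensional K V]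
    (k N : ℕ) (g : ℤ → Submodule K nl)
    (hgint : DirectSum.IsInternal g)
    (hgsupp : ∀ i : ℤ, (i < -(k : ℤ) ∨ 0 ≤ i) → g i = ⊥)
    (hgbr : ∀ i j : ℤ, ∀ x ∈ g i, ∀ y ∈ g j, ⁅x, y⁆ ∈ g (i + j))
    (Vm : ℤ → Submodule K V)
    (hVint : DirectSum.IsInternal Vm)
    (hVsupp : ∀ m : ℤ, (m < 0 ∨ (N : ℤ) < m) → Vm m = ⊥)
    (hcompat : ∀ i m : ℤ, ∀ x ∈ g i, ∀ v ∈ Vm m, ⁅x, v⁆ ∈ Vm (m + i))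
    (hker : ∀ v : V, v ∈ Vm 0 ↔ ∀ x : nl, ⁅x, v⁆ = 0)
    (U : ℕ → Submodule K (UniversalEnvelopingAlgebra K nl))
    (hUint : DirectSum.IsInternal U)
    (hU1 : (1 : UniversalEnvelopingAlgebra K nl) ∈ U 0)
    (hUmul : ∀ i j : ℕ, ∀ a ∈ U i, ∀ b ∈ U j, a * b ∈ U (i + j))
    (hUspan : ∀ i : ℕ, U i = Submodule.span K
      {u : UniversalEnvelopingAlgebra K nl |
        ∃ (s : ℕ) (d : Fin s → ℕ) (X : Fin s → nl),
          (∀ t, X t ∈ g (-(d t : ℤ))) ∧ (∑ t, d t) = i ∧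
          u = (List.ofFn fun t => ι K (X t)).prod})
    (τ : UniversalEnvelopingAlgebra K nl →ₗ[K] UniversalEnvelopingAlgebra K nl)
    (hτbij : Function.Bijective τ) (hτ1 : τ 1 = 1)
    (hτmul : ∀ a b, τ (a * b) = τ b * τ a)
    (hτι : ∀ X : nl, τ (ι K X) = -(ι K X)) :
    ∀ ρ : UniversalEnvelopingAlgebra K nl →ₐ[K] Module.End K V,
      ρ = (UniversalEnvelopingAlgebra.lift K) (LieModule.toEnd K nl V) →
      ∀ i : ℕ, i ≤ N →
        (∀ v ∈ Vm (i : ℤ), ∀ u ∈ U i, -((ρ (τ u)) v) ∈ Vm 0) ∧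
        Function.Injective
          (fun v : ↥(Vm (i : ℤ)) => fun u : ↥(U i) => -((ρ (τ (u : _))) (v : V))) :=
  stmt15_general k N g hgint hgsupp Vm hVint hVsupp hcompat hker U hUspan τ hτ1 hτmul hτι
end

section
/- Let ∇ be a linear connection on a vector bundle V over a manifold M, equipped also with a linear connection on TM with torsion T, and let ∂ : V → T*M ⊗ V be a parallel bundle map with associated map ∂ : T*M ⊗ V → Λ²T*M ⊗ V satisfying ∂∘∂ = 0 in the sense ∂(∂Σ)(ξ,η) = ∂(∂Σ(η))(ξ) − ∂(∂Σ(ξ))(η) − ∂Σ(ℒ(ξ,η)) = 0 for a bundle-valued bracket ℒ. Then the curvature of the connection ∇̃ = ∇ + ∂ is given by R̃(ξ,η)(Σ) = R(ξ,η)(Σ) + ∂(Σ)(T(ξ,η) + ℒ(ξ,η)), where R is the curvature of ∇. -/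
/-- Let `∇` be a linear connection on (the space of sections `S` of)
a vector bundle, `D` a linear connection on the tangent bundle (with vector fields `L`)
with torsion `T ξ η = D ξ η - D η ξ - ⁅ξ, η⁆`, and `∂ : S → T*M ⊗ V` a parallel bundle
map satisfying `∂∘∂ = 0` in the sense
`∂(∂Σ η) ξ - ∂(∂Σ ξ) η - ∂Σ (ℒ ξ η) = 0` for the Levi bracket `ℒ`.
Then the curvature of `∇̃ = ∇ + ∂` is
`R̃(ξ,η)Σ = R(ξ,η)Σ + ∂Σ(T(ξ,η) + ℒ(ξ,η))`. -/
theorem stmt16 {K L S : Type*} [Field K] [LieRing L] [LieAlgebra K L]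
    [AddCommGroup S] [Module K S]
    (nabla : L → S →ₗ[K] S) (D : L → L → L) (Lev : L → L → L)
    (del : S →ₗ[K] L →ₗ[K] S)
    (hpar : ∀ (ξ η : L) (sec : S),
      nabla ξ (del sec η) = del (nabla ξ sec) η + del sec (D ξ η))
    (hdd : ∀ (sec : S) (ξ η : L),
      del (del sec η) ξ - del (del sec ξ) η - del sec (Lev ξ η) = 0) :
    ∀ tn : L → S → S, (∀ ζ σ, tn ζ σ = nabla ζ σ + del σ ζ) →
    ∀ (ξ η : L) (sec : S),
      tn ξ (tn η sec) - tn η (tn ξ sec) - tn ⁅ξ, η⁆ sec =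
        (nabla ξ (nabla η sec) - nabla η (nabla ξ sec) - nabla ⁅ξ, η⁆ sec)
          + del sec ((D ξ η - D η ξ - ⁅ξ, η⁆) + Lev ξ η) := by
  intro tn h ξ η sec
  have hdd' : del (del sec η) ξ = del (del sec ξ) η + del sec (Lev ξ η) := by
    have h0 := hdd sec ξ η
    rw [sub_sub, sub_eq_zero] at h0
    exact h0
  simp only [h, map_add, map_sub, LinearMap.add_apply, LinearMap.sub_apply, hpar, hdd']
  abel
end
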